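/- Let 0 < a ≤ b and a+b ≤ x ≤ y. Then (Γ(x+1)·Γ(x-a-b+1))/(Γ(x-a+1)·Γ(x-b+1)) · (Γ(y-a+1)·Γ(y-b+1))/(Γ(y+1)·Γ(y-a-b+1)) ≥ 1. -/

import Mathlib

/-!
Euler's limit formula `Γ(s) = lim n^s n! / ∏_{j ≤ n} (s + j)` turns the quotient
`Γ(x+1) Γ(x-a-b+1) / (Γ(x-a+1) Γ(x-b+1))` into the limit of the finite products
`∏_{j ≤ n} (t-a)(t-b) / (t (t-a-b))` with `t = x + 1 + j`, the powers of `n` cancelling because the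
arguments on top and bottom have the same sum. Each factor equals `1 + ab / (t (t-a-b))`, which
decreases in `t ≥ a + b`; hence the quotient is a decreasing function of `x` on `[a + b, ∞)`.
-/

open Filter Finset Topology
open scoped Nat

theorem antitoneOn_sub_mul_sub_div_mul_sub_sub {a b : ℝ} (ha : 0 ≤ a) (hb : 0 ≤ b) :
    AntitoneOn (fun t ↦ (t - a) * (t - b) / (t * (t - a - b))) (Set.Ioi (a + b)) := by
  intro s hs t ht hst
  simp only [Set.mem_Ioi] at hs ht
  have hq : s * (s - a - b) ≤ t * (t - a - b) := by nlinarith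
  rw [div_le_div_iff₀ (by nlinarith) (by nlinarith)]
  nlinarith [mul_le_mul_of_nonneg_left hq (mul_nonneg ha hb)]

namespace Real

theorem GammaSeq_mul_div_GammaSeq_mul {s t u v : ℝ} (h : s + t = u + v) {n : ℕ} (hn : n ≠ 0) :
    GammaSeq s n * GammaSeq t n / (GammaSeq u n * GammaSeq v n) =
      ∏ j ∈ range (n + 1), (u + j) * (v + j) / ((s + j) * (t + j)) := by
  have hn₀ : (0 : ℝ) < n := by positivity
  have hpow : (n : ℝ) ^ s * n ! * ((n : ℝ) ^ t * n !) = (n : ℝ) ^ u * n ! * ((n : ℝ) ^ v * n !) := by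
    rw [mul_mul_mul_comm, ← rpow_add hn₀, h, rpow_add hn₀, mul_mul_mul_comm]
  have hne : (n : ℝ) ^ u * n ! * ((n : ℝ) ^ v * n !) ≠ 0 := by positivity
  rw [prod_div_distrib, prod_mul_distrib, prod_mul_distrib]
  simp only [GammaSeq]
  rw [div_mul_div_comm, div_mul_div_comm, hpow, div_div_div_cancel_left' _ _ hne]

end Real

open Real

noncomputable def gammaQuot (a b x : ℝ) : ℝ :=
  Gamma (x + 1) * Gamma (x - a - b + 1) / (Gamma (x - a + 1) * Gamma (x - b + 1))

theorem gammaQuot_pos {a b x : ℝ} (ha : 0 ≤ a) (hb : 0 ≤ b) (hx : a + b ≤ x) :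
    0 < gammaQuot a b x := by
  unfold gammaQuot
  have := Gamma_pos_of_pos (show 0 < x + 1 by linarith)
  have := Gamma_pos_of_pos (show 0 < x - a - b + 1 by linarith)
  have := Gamma_pos_of_pos (show 0 < x - a + 1 by linarith)
  have := Gamma_pos_of_pos (show 0 < x - b + 1 by linarith)
  positivity

theorem tendsto_prod_gammaQuot {a b x : ℝ} (ha : 0 ≤ a) (hb : 0 ≤ b) (hx : a + b ≤ x) :
    Tendsto (fun n : ℕ ↦ ∏ j ∈ range (n + 1),
        (x + 1 + j - a) * (x + 1 + j - b) / ((x + 1 + j) * (x + 1 + j - a - b)))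
      atTop (𝓝 (gammaQuot a b x)) := by
  have hden : Gamma (x - a + 1) * Gamma (x - b + 1) ≠ 0 :=
    (mul_pos (Gamma_pos_of_pos (by linarith)) (Gamma_pos_of_pos (by linarith))).ne'
  have hlim := ((GammaSeq_tendsto_Gamma (x + 1)).mul (GammaSeq_tendsto_Gamma (x - a - b + 1))).div
    ((GammaSeq_tendsto_Gamma _).mul (GammaSeq_tendsto_Gamma _)) hden
  refine hlim.congr' ?_
  filter_upwards [eventually_ne_atTop 0] with n hn
  rw [Pi.div_apply, GammaSeq_mul_div_GammaSeq_mul (by ring) hn]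
  exact prod_congr rfl fun j _ ↦ by ring

theorem gammaQuot_antitoneOn {a b : ℝ} (ha : 0 ≤ a) (hb : 0 ≤ b) :
    AntitoneOn (gammaQuot a b) (Set.Ici (a + b)) := by
  intro x hx y hy hxy
  rw [Set.mem_Ici] at hx hy
  refine le_of_tendsto_of_tendsto' (tendsto_prod_gammaQuot ha hb hy)
    (tendsto_prod_gammaQuot ha hb hx) fun n ↦ prod_le_prod (fun j _ ↦ ?_) fun j _ ↦ ?_
  · have := j.cast_nonneg (α := ℝ)
    apply div_nonneg <;> apply mul_nonneg <;> linarith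
  · have := j.cast_nonneg (α := ℝ)
    exact antitoneOn_sub_mul_sub_div_mul_sub_sub ha hb (Set.mem_Ioi.2 (by linarith))
      (Set.mem_Ioi.2 (by linarith)) (by linarith)

theorem stmt_16 (a b x y : ℝ) (ha : 0 < a) (hab : a ≤ b) (hx : a + b ≤ x) (hxy : x ≤ y) :
    Real.Gamma (x + 1) * Real.Gamma (x - a - b + 1) /
        (Real.Gamma (x - a + 1) * Real.Gamma (x - b + 1)) *
      (Real.Gamma (y - a + 1) * Real.Gamma (y - b + 1) /
        (Real.Gamma (y + 1) * Real.Gamma (y - a - b + 1))) ≥ 1 := by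
  have hb : 0 ≤ b := ha.le.trans hab
  have hy : a + b ≤ y := hx.trans hxy
  rw [← mul_div_assoc, ← div_div_eq_mul_div]
  change gammaQuot a b x / gammaQuot a b y ≥ 1
  exact (one_le_div (gammaQuot_pos ha.le hb hy)).2 (gammaQuot_antitoneOn ha.le hb hx hy hxy)
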